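/- Let n = 4t+1 ≥ 5 and H the 3-hypergraph on {x_1,...,x_n} with edges {x_1,x_2,x_3}, {x_3,x_4,x_5}, ..., {x_{n-2},x_{n-1},x_n}, {x_n,x_1,x_2}. Let A be the tuple with a_i = 1 for odd i and a_i = 0 for even i. Then for every k with 1 ≤ k ≤ n, the tuple A + e_k is a sum of two 1-covers of H. -/

import Mathlib

open MvPolynomial Finset

noncomputable section

/-- A `k`-cover of a hypergraph with edge set `E`: a nonzero tuple whose entries
sum to at least `k` over every edge. -/
def IsCover {V : Type*} (E : Finset (Finset V)) (k : ℕ) (a : V → ℕ) : Prop :=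
  a ≠ 0 ∧ ∀ e ∈ E, k ≤ ∑ i ∈ e, a i

/-- `a` is a sum of two 1-covers. -/
def SumTwoOneCovers {V : Type*} (E : Finset (Finset V)) (a : V → ℕ) : Prop :=
  ∃ b c : V → ℕ, IsCover E 1 b ∧ IsCover E 1 c ∧ a = b + c

/-- An independent set: no edge is contained in `S`. -/
def IsIndep {V : Type*} (E : Finset (Finset V)) (S : Finset V) : Prop :=
  ∀ e ∈ E, ¬ e ⊆ S

/-- `i` is in the neighborhood of `S`: `i ∉ S` and some edge consists of `i`
together with vertices of `S`. -/
def InNbhd {V : Type*} (E : Finset (Finset V)) (S : Finset V) (i : V) : Prop :=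
  i ∉ S ∧ ∃ e ∈ E, i ∈ e ∧ ∀ j ∈ e, j ≠ i → j ∈ S

open Classical in
/-- The 2-cover `A_S` attached to an independent set `S`:
`0` on `S`, `2` on `N(S)`, and `1` elsewhere. -/
noncomputable def indepCover {V : Type*} (E : Finset (Finset V)) (S : Finset V) : V → ℕ :=
  fun i => if i ∈ S then 0 else if InNbhd E S i then 2 else 1

/-- The Alexander dual of the edge ideal: `⋂_{edges e} (x_i : i ∈ e)`. -/
noncomputable def dualIdeal {V : Type*} (K : Type*) [Field K] (E : Finset (Finset V)) :
    Ideal (MvPolynomial V K) :=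
  ⨅ e ∈ E, Ideal.span (X '' (e : Set V))

/-- The monomial `x_1^{a_1} ⋯ x_n^{a_n}` attached to a tuple `a`. -/
noncomputable def coverMonomial {V : Type*} [Fintype V] (K : Type*) [Field K] (a : V → ℕ) :
    MvPolynomial V K :=
  ∏ i, X i ^ a i

/-- Connectedness of a hypergraph: any two vertices are linked by a chain of
vertices in which consecutive vertices share an edge. -/
def HConnected {V : Type*} (E : Finset (Finset V)) : Prop :=
  ∀ x y : V, ∃ l : List V, l.head? = some x ∧ l.getLast? = some y ∧
    l.Chain' fun a b => ∃ e ∈ E, a ∈ e ∧ b ∈ e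

/-- The cyclic 3-hypergraph with edges `{x_1,x_2,x_3}, {x_3,x_4,x_5}, …`
(0-based: `{2j, 2j+1, 2j+2}` modulo `n`). -/
def cyc3 (n : ℕ) (hn : 0 < n) : Finset (Finset (Fin n)) :=
  (Finset.range ((n + 1) / 2)).image fun j =>
    ({⟨(2 * j) % n, Nat.mod_lt _ hn⟩, ⟨(2 * j + 1) % n, Nat.mod_lt _ hn⟩,
      ⟨(2 * j + 2) % n, Nat.mod_lt _ hn⟩} : Finset (Fin n))

/-- The alternating tuple: `1` on odd vertices `x_1, x_3, …` (0-based even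
indices), `0` on even vertices. -/
def altCover (n : ℕ) : Fin n → ℕ :=
  fun i => if (i : ℕ) % 2 = 0 then 1 else 0

/-!
For `n = 2N + 1`, the even vertices `0, 2, …, 2N` form a cycle, consecutive ones sharing an
edge. Colour them alternately along that cycle starting from `2s`, where `s = ⌈k/2⌉`. Each
colour class meets every edge except where the colouring fails to alternate, namely the edge
through `2s - 2, 2s - 1, 2s` (or `2N, 0, 1` when `s = 0`). That edge contains both `2s` and `k`,
so putting `e_k` into the class that misses `2s` gives two 1-covers summing to `A + e_k`.
-/

lemma isCover_one_iff {V : Type*} {E : Finset (Finset V)} (hE : E.Nonempty) {a : V → ℕ} :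
    IsCover E 1 a ↔ ∀ e ∈ E, ∃ i ∈ e, a i ≠ 0 := by
  simp only [IsCover, Nat.one_le_iff_ne_zero, ne_eq, sum_eq_zero_iff, not_forall, exists_prop]
  refine ⟨And.right, fun h => ⟨fun h0 => ?_, h⟩⟩
  obtain ⟨e, he⟩ := hE
  obtain ⟨i, -, hi⟩ := h e he
  exact hi (congrFun h0 i)

lemma cyc3_nonempty (n : ℕ) (hn : 0 < n) : (cyc3 n hn).Nonempty :=
  (nonempty_range_iff.mpr (by omega)).image _

lemma exists_index_of_mem_cyc3 {N : ℕ} {e : Finset (Fin (2 * N + 1))}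
    (he : e ∈ cyc3 (2 * N + 1) (by omega)) :
    ∃ j ≤ N, ∀ i : Fin (2 * N + 1),
      ((i : ℕ) = 2 * j ∨ ((i : ℕ) + 1) / 2 = (j + 1) % (N + 1)) → i ∈ e := by
  simp only [cyc3, mem_image, mem_range] at he
  obtain ⟨j, hj, rfl⟩ := he
  refine ⟨j, by omega, fun i hi => ?_⟩
  simp only [mem_insert, mem_singleton, Fin.ext_iff]
  rcases Nat.lt_or_ge j N with hjN | hjN
  · rw [Nat.mod_eq_of_lt (by omega : j + 1 < N + 1)] at hi
    rw [Nat.mod_eq_of_lt (by omega), Nat.mod_eq_of_lt (by omega), Nat.mod_eq_of_lt (by omega)]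
    omega
  · obtain rfl : j = N := by omega
    rw [Nat.mod_self] at hi
    rw [Nat.mod_eq_of_lt (by omega : 2 * j < 2 * j + 1), Nat.mod_self]
    omega

/-- Position of the even vertex `2m` on the cycle of even vertices `0, 2, …, 2N`,
counted from `2s`. -/
def cyclePos (N s m : ℕ) : ℕ :=
  if m < s then m + (N + 1) - s else m - s

lemma cyclePos_self (N s : ℕ) : cyclePos N s s = 0 := by
  simp [cyclePos]

lemma cyclePos_succ_mod {N s j : ℕ} (hs : s ≤ N) (hj : j ≤ N) :
    cyclePos N s ((j + 1) % (N + 1)) = cyclePos N s j + 1 ∨ (j + 1) % (N + 1) = s := by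
  rcases hj.lt_or_eq with hj | rfl
  · rw [Nat.mod_eq_of_lt (by omega)]
    unfold cyclePos
    split_ifs <;> omega
  · rw [Nat.mod_self]
    unfold cyclePos
    split_ifs <;> omega

def parityCover (N s p : ℕ) (i : Fin (2 * N + 1)) : ℕ :=
  if (i : ℕ) % 2 = 0 ∧ cyclePos N s ((i : ℕ) / 2) % 2 = p then 1 else 0

lemma altCover_eq_parityCover_add (N s : ℕ) :
    altCover (2 * N + 1) = parityCover N s 0 + parityCover N s 1 := by
  funext i
  simp only [altCover, parityCover, Pi.add_apply]
  split_ifs <;> omega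

lemma parityCover_hits_or_cut_mem {N s : ℕ} (hs : s ≤ N) {e : Finset (Fin (2 * N + 1))}
    (he : e ∈ cyc3 (2 * N + 1) (by omega)) :
    (∀ p < 2, ∃ i ∈ e, parityCover N s p i ≠ 0) ∨
      ∀ i : Fin (2 * N + 1), ((i : ℕ) + 1) / 2 = s → i ∈ e := by
  obtain ⟨j, hj, hmem⟩ := exists_index_of_mem_cyc3 he
  have hnext : (j + 1) % (N + 1) < N + 1 := Nat.mod_lt _ N.succ_pos
  rcases cyclePos_succ_mod hs hj with hsucc | hcut
  · left
    intro p hp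
    obtain hpos | hpos : cyclePos N s j % 2 = p ∨ cyclePos N s ((j + 1) % (N + 1)) % 2 = p := by
      omega
    · refine ⟨⟨2 * j, by omega⟩, hmem _ (Or.inl rfl), ?_⟩
      simp [parityCover, hpos]
    · refine ⟨⟨2 * ((j + 1) % (N + 1)), by omega⟩, hmem _ (Or.inr (by simp only; omega)), ?_⟩
      simp [parityCover, hpos]
  · exact Or.inr fun i hi => hmem i (Or.inr (hi.trans hcut.symm))

lemma isCover_parityCover_zero {N s : ℕ} (hs : s ≤ N) :
    IsCover (cyc3 (2 * N + 1) (by omega)) 1 (parityCover N s 0) := by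
  rw [isCover_one_iff (cyc3_nonempty _ _)]
  intro e he
  rcases parityCover_hits_or_cut_mem hs he with hits | hcut
  · exact hits 0 two_pos
  · refine ⟨⟨2 * s, by omega⟩, hcut _ (by simp only; omega), ?_⟩
    simp [parityCover, cyclePos_self]

lemma isCover_single_add_parityCover_one {N : ℕ} (k : Fin (2 * N + 1)) :
    IsCover (cyc3 (2 * N + 1) (by omega)) 1
      (Pi.single k 1 + parityCover N (((k : ℕ) + 1) / 2) 1) := by
  rw [isCover_one_iff (cyc3_nonempty _ _)]
  intro e he
  rcases parityCover_hits_or_cut_mem (s := ((k : ℕ) + 1) / 2) (by omega) he with hits | hcut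
  · obtain ⟨i, hi, hne⟩ := hits 1 one_lt_two
    exact ⟨i, hi, by simp [hne]⟩
  · exact ⟨k, hcut k rfl, by simp⟩

theorem sumTwoOneCovers_altCover_add_single (N : ℕ) (k : Fin (2 * N + 1)) :
    SumTwoOneCovers (cyc3 (2 * N + 1) (by omega)) (altCover (2 * N + 1) + Pi.single k 1) := by
  refine ⟨_, _, isCover_single_add_parityCover_one k,
    isCover_parityCover_zero (s := ((k : ℕ) + 1) / 2) (by omega), ?_⟩
  rw [altCover_eq_parityCover_add N (((k : ℕ) + 1) / 2)]
  abel

theorem stmt11 {n t : ℕ} (hn : n = 4 * t + 1) :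
    ∀ k : Fin n, SumTwoOneCovers (cyc3 n (by omega)) (altCover n + Pi.single k 1) := by
  obtain rfl : n = 2 * (2 * t) + 1 := by omega
  exact sumTwoOneCovers_altCover_add_single (2 * t)
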